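/- arXiv:2403.19476 — 6 statements merged into one kernel-verified Lean document; each statement's English description precedes it below -/
import Mathlib

section
/- Let J be a nonempty finite index set, let c : J → ℝ be nonnegative coefficients, and let Γ be a real number with 0 ≤ Γ and ⌊Γ⌋ < |J|. Then the optimal value of the linear program β(Γ) = max { Σ_{j∈J} α_j c_j : 0 ≤ α_j ≤ 1 for all j ∈ J, Σ_{j∈J} α_j ≤ Γ } equals the maximum, over all pairs (S, t) with S ⊆ J, |S| = ⌊Γ⌋ and t ∈ J \ S, of Σ_{j∈S} c_j + (Γ − ⌊Γ⌋)·c_t. -/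
open Finset

lemma protection_top_k {J : Type*} [Fintype J] (c : J → ℝ) :
    ∀ k, k ≤ Fintype.card J → ∃ S : Finset J, S.card = k ∧
      ∀ i ∈ S, ∀ j ∉ S, c j ≤ c i := by
  classical
  intro k
  induction k with
  | zero => intro _; exact ⟨∅, by simp⟩
  | succ k ih =>
    intro hk
    obtain ⟨S, hcard, hS⟩ := ih (Nat.le_of_succ_le hk)
    have hne : Sᶜ.Nonempty := by
      rw [← Finset.card_pos, Finset.card_compl, hcard]
      omega
    obtain ⟨t, ht, hmax⟩ := Finset.exists_max_image Sᶜ c hne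
    have htS : t ∉ S := Finset.mem_compl.mp ht
    refine ⟨insert t S, by rw [Finset.card_insert_of_notMem htS, hcard], ?_⟩
    intro i hi j hj
    rcases Finset.mem_insert.mp hi with rfl | hi
    · exact hmax j (Finset.mem_compl.mpr fun h => hj (Finset.mem_insert_of_mem h))
    · exact hS i hi j fun h => hj (Finset.mem_insert_of_mem h)

/-- For a nonempty finite index set `J`, nonnegative coefficients
`c : J → ℝ`, and a real `Γ` with `0 ≤ Γ` and `⌊Γ⌋ < |J|`, the optimal value of the
protection linear program
`β(Γ) = max { Σ_j α_j c_j : 0 ≤ α_j ≤ 1, Σ_j α_j ≤ Γ }`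
equals the maximum over all pairs `(S, t)` with `S ⊆ J`, `|S| = ⌊Γ⌋`, `t ∈ J \ S` of
`Σ_{j∈S} c_j + (Γ − ⌊Γ⌋)·c_t`. -/
theorem protection_lp_eq_max_over_pairs
    {J : Type*} [Fintype J] [Nonempty J]
    (c : J → ℝ) (hc : ∀ j, 0 ≤ c j)
    (Γ : ℝ) (hΓ0 : 0 ≤ Γ) (hΓcard : ⌊Γ⌋ < (Fintype.card J : ℤ)) :
    ∃ M : ℝ,
      IsGreatest {v : ℝ | ∃ α : J → ℝ, (∀ j, 0 ≤ α j ∧ α j ≤ 1) ∧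
          (∑ j, α j) ≤ Γ ∧ v = ∑ j, α j * c j} M ∧
      IsGreatest {v : ℝ | ∃ (S : Finset J) (t : J), (S.card : ℤ) = ⌊Γ⌋ ∧ t ∉ S ∧
          v = (∑ j ∈ S, c j) + (Γ - (⌊Γ⌋ : ℝ)) * c t} M := by
  classical
  set k : ℕ := (⌊Γ⌋).toNat with hkdef
  have hfl0 : (0 : ℤ) ≤ ⌊Γ⌋ := Int.floor_nonneg.mpr hΓ0
  have hkZ : (k : ℤ) = ⌊Γ⌋ := Int.toNat_of_nonneg hfl0
  have hkR : (k : ℝ) = (⌊Γ⌋ : ℝ) := by exact_mod_cast congrArg (Int.cast : ℤ → ℝ) hkZ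
  have hkn : k < Fintype.card J := by omega
  set f : ℝ := Γ - (⌊Γ⌋ : ℝ) with hfdef
  have hf0 : 0 ≤ f := sub_nonneg.mpr (Int.floor_le Γ)
  have hf1 : f ≤ 1 := by
    have := Int.lt_floor_add_one Γ
    have : Γ < (⌊Γ⌋ : ℝ) + 1 := this
    linarith
  -- top-k set
  obtain ⟨S₀, hS₀card, hS₀⟩ := protection_top_k c k (le_of_lt hkn)
  have hS₀c : S₀ᶜ.Nonempty := by
    rw [← Finset.card_pos, Finset.card_compl, hS₀card]; omega
  obtain ⟨t₀, ht₀, ht₀max⟩ := Finset.exists_max_image S₀ᶜ c hS₀c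
  have ht₀S : t₀ ∉ S₀ := Finset.mem_compl.mp ht₀
  set θ : ℝ := c t₀ with hθdef
  set M : ℝ := (∑ j ∈ S₀, c j) + f * θ with hMdef
  -- every pair value is achieved by a feasible LP solution
  have key : ∀ (S : Finset J) (t : J), (S.card : ℤ) = ⌊Γ⌋ → t ∉ S →
      ∃ α : J → ℝ, (∀ j, 0 ≤ α j ∧ α j ≤ 1) ∧ (∑ j, α j) ≤ Γ ∧
        (∑ j ∈ S, c j) + f * c t = ∑ j, α j * c j := by
    intro S t hScard htS
    have hScR : (S.card : ℝ) = (⌊Γ⌋ : ℝ) := by exact_mod_cast congrArg (Int.cast : ℤ → ℝ) hScard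
    refine ⟨fun j => (if j ∈ S then (1:ℝ) else 0) + (if j = t then f else 0), ?_, ?_, ?_⟩
    · intro j
      constructor
      · positivity
      · by_cases hj : j ∈ S
        · have : j ≠ t := fun h => htS (h ▸ hj)
          simp [hj, this]
        · by_cases hjt : j = t
          · subst hjt; simp [hj, hf1]
          · simp [hj, hjt]
    · have h1 : (∑ j, (if j ∈ S then (1:ℝ) else 0)) = S.card := by
        simp
      have h2 : (∑ j, (if j = t then f else 0)) = f := by
        simp
      rw [Finset.sum_add_distrib, h1, h2, hScR]
      simp [hfdef]
    · have h1 : ∀ j, ((if j ∈ S then (1:ℝ) else 0) + (if j = t then f else 0)) * c j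
          = (if j ∈ S then c j else 0) + (if j = t then f * c t else 0) := by
        intro j
        by_cases hj : j ∈ S
        · have hne : j ≠ t := fun h => htS (h ▸ hj)
          simp [hj, hne]
        · by_cases hjt : j = t
          · subst hjt; simp [hj]
          · simp [hj, hjt]
      rw [Finset.sum_congr rfl (fun j _ => h1 j), Finset.sum_add_distrib]
      have h2 : (∑ j, (if j ∈ S then c j else 0)) = ∑ j ∈ S, c j := by
        rw [Finset.sum_ite_mem, Finset.univ_inter]
      have h3 : (∑ j, (if j = t then f * c t else 0)) = f * c t := by
        simp
      rw [h2, h3]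
  -- M is an upper bound of the LP value set
  have hub : ∀ v ∈ {v : ℝ | ∃ α : J → ℝ, (∀ j, 0 ≤ α j ∧ α j ≤ 1) ∧
      (∑ j, α j) ≤ Γ ∧ v = ∑ j, α j * c j}, v ≤ M := by
    rintro v ⟨α, hα, hsum, rfl⟩
    set y : J → ℝ := fun j => max (c j - θ) 0 with hydef
    have hy0 : ∀ j, 0 ≤ y j := fun j => le_max_right _ _
    have hcy : ∀ j, c j ≤ θ + y j := by
      intro j
      have : c j - θ ≤ y j := le_max_left _ _
      linarith
    have hθ0 : 0 ≤ θ := hc t₀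
    have step1 : (∑ j, α j * c j) ≤ ∑ j, (α j * θ + y j) := by
      apply Finset.sum_le_sum
      intro j _
      have h1 : α j * c j ≤ α j * (θ + y j) :=
        mul_le_mul_of_nonneg_left (hcy j) (hα j).1
      have h2 : α j * y j ≤ y j := by
        nlinarith [(hα j).2, hy0 j, (hα j).1]
      nlinarith
    have step2 : (∑ j, (α j * θ + y j)) = θ * (∑ j, α j) + ∑ j, y j := by
      rw [Finset.sum_add_distrib, ← Finset.sum_mul]
      ring
    have step3 : θ * (∑ j, α j) ≤ θ * Γ := mul_le_mul_of_nonneg_left hsum hθ0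
    have hysum : (∑ j, y j) = ∑ j ∈ S₀, (c j - θ) := by
      rw [← Finset.sum_add_sum_compl S₀ y]
      have hA : (∑ j ∈ S₀, y j) = ∑ j ∈ S₀, (c j - θ) := by
        apply Finset.sum_congr rfl
        intro i hi
        have : θ ≤ c i := hS₀ i hi t₀ ht₀S
        simp [hydef, max_eq_left, sub_nonneg.mpr this]
      have hB : (∑ j ∈ S₀ᶜ, y j) = 0 := by
        apply Finset.sum_eq_zero
        intro j hj
        have : c j ≤ θ := ht₀max j hj
        simp [hydef, max_eq_right, sub_nonpos.mpr this]
      rw [hA, hB, add_zero]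
    calc (∑ j, α j * c j) ≤ θ * (∑ j, α j) + ∑ j, y j := by rw [← step2]; exact step1
      _ ≤ θ * Γ + ∑ j, y j := by linarith
      _ = θ * Γ + ((∑ j ∈ S₀, c j) - S₀.card * θ) := by
          rw [hysum, Finset.sum_sub_distrib]
          simp [mul_comm]
      _ = M := by
          rw [hMdef, hS₀card, hkR, hfdef]
          ring
  refine ⟨M, ⟨?_, hub⟩, ⟨?_, ?_⟩⟩
  · -- M in LP set
    obtain ⟨α, h1, h2, h3⟩ := key S₀ t₀ (by rw [hS₀card, hkZ]) ht₀S
    exact ⟨α, h1, h2, h3 ▸ rfl⟩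
  · exact ⟨S₀, t₀, by rw [hS₀card, hkZ], ht₀S, rfl⟩
  · rintro v ⟨S, t, hScard, htS, rfl⟩
    obtain ⟨α, h1, h2, h3⟩ := key S t hScard htS
    exact hub _ ⟨α, h1, h2, h3⟩
end

section
/- Let J be a nonempty finite index set, let c : J → ℝ be nonnegative coefficients, and let Γ be a real number with 0 ≤ Γ and ⌊Γ⌋ < |J|. Then the linear program β(Γ) = max { Σ_{j∈J} α_j c_j : 0 ≤ α_j ≤ 1 for all j, Σ_{j∈J} α_j ≤ Γ } attains its maximum at a vector α* in which exactly ⌊Γ⌋ components equal 1, at most one component equals Γ − ⌊Γ⌋, and all remaining components equal 0. -/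
/-- For a nonempty finite index set `J`, nonnegative coefficients
`c : J → ℝ`, and a real `Γ` with `0 ≤ Γ` and `⌊Γ⌋ < |J|`, the protection linear program
`max { Σ_j α_j c_j : 0 ≤ α_j ≤ 1, Σ_j α_j ≤ Γ }` attains its maximum at a vector `α*`
in which exactly `⌊Γ⌋` components equal `1`, at most one component equals `Γ − ⌊Γ⌋`,
and all remaining components equal `0`. -/
theorem protection_lp_attained_at_vertex
    {J : Type*} [Fintype J] [Nonempty J] [DecidableEq J]
    (c : J → ℝ) (hc : ∀ j, 0 ≤ c j)
    (Γ : ℝ) (hΓ0 : 0 ≤ Γ) (hΓcard : ⌊Γ⌋ < (Fintype.card J : ℤ)) :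
    ∃ α : J → ℝ,
      ((∀ j, 0 ≤ α j ∧ α j ≤ 1) ∧ (∑ j, α j) ≤ Γ) ∧
      (∀ β : J → ℝ, (∀ j, 0 ≤ β j ∧ β j ≤ 1) → (∑ j, β j) ≤ Γ →
        ∑ j, β j * c j ≤ ∑ j, α j * c j) ∧
      (∃ S T : Finset J, Disjoint S T ∧ (S.card : ℤ) = ⌊Γ⌋ ∧ T.card ≤ 1 ∧
        (∀ j ∈ S, α j = 1) ∧
        (∀ j ∈ T, α j = Γ - (⌊Γ⌋ : ℝ)) ∧
        (∀ j, j ∉ S → j ∉ T → α j = 0)) := by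
  classical
  set N := Fintype.card J with hN
  set n : ℕ := ⌊Γ⌋.toNat with hn
  have hfloor : ⌊Γ⌋ = (n : ℤ) := (Int.toNat_of_nonneg (Int.floor_nonneg.mpr hΓ0)).symm
  have hnN : n < N := by omega
  set e0 : Fin N ≃ J := (Fintype.equivFin J).symm with he0
  set f : Fin N → ℝ := fun i => -c (e0 i) with hf
  set e : Fin N ≃ J := (Tuple.sort f).trans e0 with he
  have hanti : ∀ i k : Fin N, i ≤ k → c (e k) ≤ c (e i) := by
    intro i k hik
    have h2 := Tuple.monotone_sort f hik
    simp only [Function.comp_apply, hf] at h2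
    simp only [he, Equiv.trans_apply]
    linarith
  have hfloorR : (⌊Γ⌋ : ℝ) = (n : ℝ) := by exact_mod_cast congrArg (Int.cast : ℤ → ℝ) hfloor
  have hfrac0 : 0 ≤ Γ - (n : ℝ) := by
    have := Int.floor_le Γ; rw [hfloor] at this; push_cast at this; linarith
  have hfrac1 : Γ - (n : ℝ) < 1 := by
    have := Int.lt_floor_add_one Γ; rw [hfloor] at this; push_cast at this; linarith
  set t : J := e ⟨n, hnN⟩ with ht
  set α : J → ℝ := fun j => if ((e.symm j : Fin N) : ℕ) < n then 1
      else if ((e.symm j : Fin N) : ℕ) = n then Γ - (n : ℝ) else 0 with hα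
  have hαval : ∀ i : Fin N, α (e i) = if (i : ℕ) < n then 1
      else if (i : ℕ) = n then Γ - (n : ℝ) else 0 := by
    intro i; simp [hα]
  have hαbound : ∀ j, 0 ≤ α j ∧ α j ≤ 1 := by
    intro j
    simp only [hα]
    split_ifs <;> constructor <;> linarith
  have hcardfilter : ((Finset.univ : Finset (Fin N)).filter fun i : Fin N => (i:ℕ) < n).card = n := by
    rw [Finset.card_filter]
    rw [Fin.sum_univ_eq_sum_range (fun i => if i < n then 1 else 0) N]
    rw [← Finset.card_filter]
    have : Finset.filter (fun x => x < n) (Finset.range N) = Finset.range n := by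
      ext x; simp; omega
    rw [this, Finset.card_range]
  have hsumα : ∑ j, α j = Γ := by
    rw [← Equiv.sum_comp e α]
    have : ∀ i : Fin N, α (e i) = (if (i : ℕ) < n then (1:ℝ) else 0)
        + (if i = (⟨n, hnN⟩ : Fin N) then Γ - (n : ℝ) else 0) := by
      intro i
      rw [hαval i]
      rcases lt_trichotomy (i : ℕ) n with h | h | h
      · have : i ≠ (⟨n, hnN⟩ : Fin N) := by intro hh; rw [hh] at h; simp at h
        simp [h, this]
      · have : i = (⟨n, hnN⟩ : Fin N) := Fin.ext h
        simp [h, this]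
      · have h1 : ¬ (i : ℕ) < n := by omega
        have h2 : (i : ℕ) ≠ n := by omega
        have : i ≠ (⟨n, hnN⟩ : Fin N) := by intro hh; rw [hh] at h2; simp at h2
        simp [h1, h2, this]
    rw [Finset.sum_congr rfl (fun i _ => this i), Finset.sum_add_distrib]
    rw [Finset.sum_ite_eq' Finset.univ (⟨n, hnN⟩ : Fin N), if_pos (Finset.mem_univ _)]
    rw [Finset.sum_ite, Finset.sum_const, Finset.sum_const]
    simp only [nsmul_eq_mul, smul_eq_mul, mul_one, mul_zero, add_zero]
    rw [hcardfilter]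
    ring
  refine ⟨α, ⟨hαbound, le_of_eq hsumα⟩, ?_, ?_⟩
  · -- optimality
    intro β hβb hβΓ
    have key : ∀ j, (β j - α j) * (c j - c t) ≤ 0 := by
      intro j
      have hj : e (e.symm j) = j := e.apply_symm_apply j
      rcases lt_trichotomy ((e.symm j : Fin N) : ℕ) n with h | h | h
      · have hα1 : α j = 1 := by simp [hα, h]
        have hct : c t ≤ c j := by
          have := hanti (e.symm j) ⟨n, hnN⟩ (by rw [Fin.le_def]; simp; omega)
          rw [hj] at this; exact this
        have := (hβb j).2
        nlinarith
      · have : e.symm j = (⟨n, hnN⟩ : Fin N) := Fin.ext h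
        have hjt : j = t := by rw [← hj, this]
        rw [hjt, sub_self, mul_zero]
      · have hα0 : α j = 0 := by
          have h1 : ¬ ((e.symm j : Fin N) : ℕ) < n := by omega
          have h2 : ((e.symm j : Fin N) : ℕ) ≠ n := by omega
          simp [hα, h1, h2]
        have hct : c j ≤ c t := by
          have := hanti ⟨n, hnN⟩ (e.symm j) (by rw [Fin.le_def]; simp; omega)
          rw [hj] at this; exact this
        have := (hβb j).1
        nlinarith
    have hsum1 : ∑ j, (β j - α j) * (c j - c t) ≤ 0 :=
      Finset.sum_nonpos (fun j _ => key j)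
    have hexp : ∑ j, (β j - α j) * (c j - c t)
        = (∑ j, β j * c j - ∑ j, α j * c j) - c t * (∑ j, β j - ∑ j, α j) := by
      have h1 : ∀ j : J, (β j - α j) * (c j - c t)
          = (β j * c j - α j * c j) - (c t * β j - c t * α j) := fun j => by ring
      rw [Finset.sum_congr rfl fun j _ => h1 j, Finset.sum_sub_distrib,
        Finset.sum_sub_distrib, Finset.sum_sub_distrib, ← Finset.mul_sum, ← Finset.mul_sum,
        mul_sub]
    have hdiff : (∑ j, β j) - (∑ j, α j) ≤ 0 := by rw [hsumα]; linarith
    have hct0 : 0 ≤ c t := hc t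
    nlinarith [mul_nonpos_of_nonneg_of_nonpos hct0 hdiff]
  · -- vertex structure
    refine ⟨((Finset.univ : Finset (Fin N)).filter fun i : Fin N => (i:ℕ) < n).image e,
      {t}, ?_, ?_, ?_, ?_, ?_, ?_⟩
    · simp only [Finset.disjoint_singleton_right, Finset.mem_image]
      rintro ⟨i, hi, hit⟩
      simp only [Finset.mem_filter] at hi
      have : i = (⟨n, hnN⟩ : Fin N) := e.injective (hit.trans ht)
      rw [this] at hi; simp at hi
    · rw [Finset.card_image_of_injective _ e.injective, hcardfilter, hfloor]
    · simp
    · intro j hj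
      simp only [Finset.mem_image, Finset.mem_filter] at hj
      obtain ⟨i, ⟨-, hi⟩, rfl⟩ := hj
      simp [hα, hi]
    · intro j hj
      simp only [Finset.mem_singleton] at hj
      subst hj
      rw [hfloorR]
      simp [hα, ht]
    · intro j hjS hjT
      have h1 : ¬ ((e.symm j : Fin N) : ℕ) < n := by
        intro h
        apply hjS
        simp only [Finset.mem_image, Finset.mem_filter]
        exact ⟨e.symm j, ⟨Finset.mem_univ _, h⟩, e.apply_symm_apply j⟩
      have h2 : ((e.symm j : Fin N) : ℕ) ≠ n := by
        intro h
        apply hjT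
        simp only [Finset.mem_singleton, ht]
        rw [← e.apply_symm_apply j]
        exact congrArg e (Fin.ext h)
      simp [hα, h1, h2]
end

section
/- Let J be a finite index set, c : J → ℝ nonnegative coefficients, and Γ a real number with 0 ≤ Γ ≤ |J|. Then strong duality holds between the protection linear program and its dual: there exist a primal feasible α* (0 ≤ α*_j ≤ 1 for all j, Σ_j α*_j ≤ Γ) and a dual feasible pair (z*, p*) (z* ≥ 0, p*_j ≥ 0, z* + p*_j ≥ c_j for all j) such that Σ_{j∈J} α*_j c_j = Γ·z* + Σ_{j∈J} p*_j, and this common value equals both the maximum of the primal objective over primal feasible vectors and the minimum of the dual objective over dual feasible pairs. -/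
open Finset

/-- Weak duality for the protection LP. -/
private lemma protection_weak_duality {J : Type*} [Fintype J] (c : J → ℝ)
    (Γ : ℝ) (α : J → ℝ) (z : ℝ) (p : J → ℝ)
    (hα : ∀ j, 0 ≤ α j ∧ α j ≤ 1) (hsum : (∑ j, α j) ≤ Γ)
    (hz : 0 ≤ z) (hp : ∀ j, 0 ≤ p j) (hzp : ∀ j, c j ≤ z + p j) :
    (∑ j, α j * c j) ≤ Γ * z + ∑ j, p j := by
  calc (∑ j, α j * c j) ≤ ∑ j, α j * (z + p j) := by
        apply Finset.sum_le_sum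
        intro j _
        exact mul_le_mul_of_nonneg_left (hzp j) (hα j).1
    _ = (∑ j, α j) * z + ∑ j, α j * p j := by
        rw [Finset.sum_mul, ← Finset.sum_add_distrib]
        apply Finset.sum_congr rfl
        intro j _; ring
    _ ≤ Γ * z + ∑ j, p j := by
        apply add_le_add (mul_le_mul_of_nonneg_right hsum hz)
        apply Finset.sum_le_sum
        intro j _
        exact mul_le_of_le_one_left (hp j) (hα j).2

/-- From a pair of feasible primal/dual solutions with equal objective values,
derive the full strong duality statement. -/
private lemma protection_from_feasible {J : Type*} [Fintype J] (c : J → ℝ)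
    (Γ : ℝ) (α : J → ℝ) (z : ℝ) (p : J → ℝ)
    (h1 : ∀ j, 0 ≤ α j ∧ α j ≤ 1) (h2 : (∑ j, α j) ≤ Γ)
    (h3 : 0 ≤ z) (h4 : ∀ j, 0 ≤ p j) (h5 : ∀ j, c j ≤ z + p j)
    (h6 : (∑ j, α j * c j) = Γ * z + ∑ j, p j) :
    ∃ (α : J → ℝ) (z : ℝ) (p : J → ℝ),
      (∀ j, 0 ≤ α j ∧ α j ≤ 1) ∧ (∑ j, α j) ≤ Γ ∧
      0 ≤ z ∧ (∀ j, 0 ≤ p j) ∧ (∀ j, c j ≤ z + p j) ∧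
      (∑ j, α j * c j) = Γ * z + ∑ j, p j ∧
      IsGreatest {v : ℝ | ∃ α' : J → ℝ, (∀ j, 0 ≤ α' j ∧ α' j ≤ 1) ∧
          (∑ j, α' j) ≤ Γ ∧ v = ∑ j, α' j * c j} (∑ j, α j * c j) ∧
      IsLeast {v : ℝ | ∃ (z' : ℝ) (p' : J → ℝ), 0 ≤ z' ∧ (∀ j, 0 ≤ p' j) ∧
          (∀ j, c j ≤ z' + p' j) ∧ v = Γ * z' + ∑ j, p' j} (∑ j, α j * c j) := by
  refine ⟨α, z, p, h1, h2, h3, h4, h5, h6, ⟨⟨α, h1, h2, rfl⟩, ?_⟩, ⟨⟨z, p, h3, h4, h5, h6⟩, ?_⟩⟩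
  · rintro v ⟨α', hα', hs', rfl⟩
    calc (∑ j, α' j * c j) ≤ Γ * z + ∑ j, p j :=
          protection_weak_duality c Γ α' z p hα' hs' h3 h4 h5
      _ = ∑ j, α j * c j := h6.symm
  · rintro v ⟨z', p', hz', hp', hzp', rfl⟩
    exact protection_weak_duality c Γ α z' p' h1 h2 hz' hp' hzp'

/-- There is an arrangement of the coefficients in decreasing order. -/
private lemma exists_antitone_equiv {J : Type*} [Fintype J] (c : J → ℝ) :
    ∃ e : Fin (Fintype.card J) ≃ J, Antitone (c ∘ e) := by
  set e0 := Fintype.equivFin J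
  set f : Fin (Fintype.card J) → ℝ := fun i => -(c (e0.symm i))
  refine ⟨(Tuple.sort f).trans e0.symm, ?_⟩
  intro i j hij
  have := Tuple.monotone_sort f hij
  simpa [f, Function.comp] using neg_le_neg_iff.mp this

/-- Strong duality between the protection linear program and its dual:
there exist a primal feasible `α*` and a dual feasible pair `(z*, p*)` with equal
objective values, and this common value is both the maximum of the primal objective
over primal feasible vectors and the minimum of the dual objective over dual feasible
pairs. -/
theorem protection_lp_strong_duality
    {J : Type*} [Fintype J] (c : J → ℝ) (hc : ∀ j, 0 ≤ c j)
    (Γ : ℝ) (hΓ0 : 0 ≤ Γ) (hΓcard : Γ ≤ (Fintype.card J : ℝ)) :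
    ∃ (α : J → ℝ) (z : ℝ) (p : J → ℝ),
      (∀ j, 0 ≤ α j ∧ α j ≤ 1) ∧ (∑ j, α j) ≤ Γ ∧
      0 ≤ z ∧ (∀ j, 0 ≤ p j) ∧ (∀ j, c j ≤ z + p j) ∧
      (∑ j, α j * c j) = Γ * z + ∑ j, p j ∧
      IsGreatest {v : ℝ | ∃ α' : J → ℝ, (∀ j, 0 ≤ α' j ∧ α' j ≤ 1) ∧
          (∑ j, α' j) ≤ Γ ∧ v = ∑ j, α' j * c j} (∑ j, α j * c j) ∧
      IsLeast {v : ℝ | ∃ (z' : ℝ) (p' : J → ℝ), 0 ≤ z' ∧ (∀ j, 0 ≤ p' j) ∧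
          (∀ j, c j ≤ z' + p' j) ∧ v = Γ * z' + ∑ j, p' j} (∑ j, α j * c j) := by
  set n := Fintype.card J with hn
  obtain ⟨e, hd⟩ := exists_antitone_equiv c
  set k := ⌊Γ⌋₊ with hkdef
  have hkΓ : (k : ℝ) ≤ Γ := Nat.floor_le hΓ0
  have hΓk : Γ < (k : ℝ) + 1 := Nat.lt_floor_add_one Γ
  have hkn : k ≤ n := by exact_mod_cast hkΓ.trans hΓcard
  by_cases hk : k < n
  · -- the main case : k < n
    set z : ℝ := c (e ⟨k, hk⟩) with hzdef
    set α : J → ℝ := fun j => min 1 (max 0 (Γ - ((e.symm j : Fin n) : ℕ))) with hαdef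
    set p : J → ℝ := fun j => max (c j - z) 0 with hpdef
    -- the extended sorted coefficients
    set D : ℕ → ℝ := fun i => if h : i < n then c (e ⟨i, h⟩) else 0 with hDdef
    have hzD : z = D k := by simp [hDdef, hk, hzdef]
    -- the sorted primal solution as a function of ℕ
    set A : ℕ → ℝ := fun i => if i < k then 1 else if i = k then Γ - k else 0 with hAdef
    have hA : ∀ i : Fin n, α (e i) = A (i : ℕ) := by
      intro i
      simp only [hαdef, hAdef, Equiv.symm_apply_apply]
      rcases lt_trichotomy (i : ℕ) k with h | h | h
      · have h1 : (1 : ℝ) ≤ Γ - (i : ℕ) := by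
          have : ((i : ℕ) : ℝ) + 1 ≤ (k : ℝ) := by exact_mod_cast h
          linarith
        rw [if_pos h, max_eq_right (by linarith), min_eq_left h1]
      · rw [if_neg (by omega), if_pos h, h]
        rw [max_eq_right (by linarith), min_eq_right (by linarith)]
      · have h1 : Γ - (i : ℕ) < 0 := by
          have : (k : ℝ) + 1 ≤ ((i : ℕ) : ℝ) := by exact_mod_cast h
          linarith
        rw [if_neg (by omega), if_neg (by omega), max_eq_left (by linarith), min_eq_right (by norm_num)]
    -- the sorted dual p as a function of ℕ
    set P : ℕ → ℝ := fun i => if i < k then D i - z else 0 with hPdef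
    have hP : ∀ i : Fin n, p (e i) = P (i : ℕ) := by
      intro i
      have hDi : c (e i) = D (i : ℕ) := by simp [hDdef, i.isLt]
      simp only [hpdef, hPdef, hDi]
      rcases lt_or_ge (i : ℕ) k with h | h
      · have hle : z ≤ D (i : ℕ) := by
          have := hd (show i ≤ (⟨k, hk⟩ : Fin n) from Fin.le_def.mpr (le_of_lt h))
          simp only [Function.comp_apply] at this
          rw [hzdef, ← hDi]; exact this
        rw [if_pos h, max_eq_left (by linarith)]
      · have hle : D (i : ℕ) ≤ z := by
          have := hd (show (⟨k, hk⟩ : Fin n) ≤ i from Fin.le_def.mpr h)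
          simp only [Function.comp_apply] at this
          rw [hzdef, ← hDi]; exact this
        rw [if_neg (by omega), max_eq_right (by linarith)]
    -- transport sums over J to sums over ℕ ranges
    have tA : (∑ j, α j) = ∑ i ∈ range n, A i := by
      rw [← Equiv.sum_comp e α, Fintype.sum_congr _ _ hA, Fin.sum_univ_eq_sum_range]
    have tAC : (∑ j, α j * c j) = ∑ i ∈ range n, A i * D i := by
      rw [← Equiv.sum_comp e (fun j => α j * c j)]
      rw [show (∑ i : Fin n, α (e i) * c (e i)) = ∑ i : Fin n, A (i:ℕ) * D (i:ℕ) from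
        Fintype.sum_congr _ _ (fun i => by rw [hA i]; congr 1; simp [hDdef, i.isLt])]
      exact Fin.sum_univ_eq_sum_range (fun m => A m * D m) n
    have tP : (∑ j, p j) = ∑ i ∈ range n, P i := by
      rw [← Equiv.sum_comp e p, Fintype.sum_congr _ _ hP, Fin.sum_univ_eq_sum_range]
    -- compute the sums by splitting at k
    have sA : ∑ i ∈ range n, A i = (k : ℝ) + (Γ - k) := by
      rw [← Finset.sum_range_add_sum_Ico A hkn]
      have e1 : ∑ i ∈ range k, A i = (k : ℝ) := by
        rw [show ∑ i ∈ range k, A i = ∑ _i ∈ range k, (1 : ℝ) from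
          Finset.sum_congr rfl (fun i hi => by simp [hAdef, Finset.mem_range.mp hi])]
        simp
      have e2 : ∑ i ∈ Finset.Ico k n, A i = Γ - k := by
        rw [Finset.sum_eq_single_of_mem k (Finset.mem_Ico.mpr ⟨le_refl k, hk⟩)
          (fun b hb hbk => by simp [hAdef, hbk, Nat.not_lt.mpr (Finset.mem_Ico.mp hb).1])]
        simp [hAdef]
      rw [e1, e2]
    have sAC : ∑ i ∈ range n, A i * D i = (∑ i ∈ range k, D i) + (Γ - k) * D k := by
      rw [← Finset.sum_range_add_sum_Ico (fun i => A i * D i) hkn]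
      have e1 : ∑ i ∈ range k, A i * D i = ∑ i ∈ range k, D i :=
        Finset.sum_congr rfl (fun i hi => by simp [hAdef, Finset.mem_range.mp hi])
      have e2 : ∑ i ∈ Finset.Ico k n, A i * D i = (Γ - k) * D k := by
        rw [Finset.sum_eq_single_of_mem k (Finset.mem_Ico.mpr ⟨le_refl k, hk⟩)
          (fun b hb hbk => by simp [hAdef, hbk, Nat.not_lt.mpr (Finset.mem_Ico.mp hb).1])]
        simp [hAdef]
      rw [e1, e2]
    have sP : ∑ i ∈ range n, P i = (∑ i ∈ range k, D i) - k * z := by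
      rw [← Finset.sum_range_add_sum_Ico P hkn]
      have h2 : ∑ i ∈ Finset.Ico k n, P i = 0 :=
        Finset.sum_eq_zero (fun i hi => by
          simp [hPdef, Nat.not_lt.mpr (Finset.mem_Ico.mp hi).1])
      rw [h2, add_zero]
      rw [show ∑ i ∈ range k, P i = ∑ i ∈ range k, (D i - z) from
        Finset.sum_congr rfl (fun i hi => by
          simp only [hPdef, if_pos (Finset.mem_range.mp hi)]),
        Finset.sum_sub_distrib, Finset.sum_const, Finset.card_range]
      simp [mul_comm]
    -- feasibility
    have h1 : ∀ j, 0 ≤ α j ∧ α j ≤ 1 := fun j =>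
      ⟨le_min (by norm_num) (le_max_left 0 _), min_le_left _ _⟩
    have h2 : (∑ j, α j) ≤ Γ := by rw [tA, sA]; linarith
    have h3 : 0 ≤ z := hc _
    have h4 : ∀ j, 0 ≤ p j := fun j => le_max_right _ 0
    have h5 : ∀ j, c j ≤ z + p j := fun j => by
      have := le_max_left (c j - z) 0
      simp only [hpdef]; linarith
    have h6 : (∑ j, α j * c j) = Γ * z + ∑ j, p j := by
      rw [tAC, sAC, tP, sP, ← hzD]; ring
    exact protection_from_feasible c Γ α z p h1 h2 h3 h4 h5 h6
  · -- degenerate case : k = n, hence Γ = n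
    have hkn' : k = n := le_antisymm hkn (Nat.not_lt.mp hk)
    have hΓn : Γ = (n : ℝ) := le_antisymm hΓcard (by rw [← hkn']; exact hkΓ)
    have h6 : (∑ j, (1 : ℝ) * c j) = Γ * 0 + ∑ j, c j := by
      simp
    refine protection_from_feasible c Γ (fun _ => 1) 0 c
      (fun j => ⟨zero_le_one, le_refl 1⟩) ?_ le_rfl hc (fun j => by simp) h6
    rw [Finset.sum_const, hΓn]
    simp [hn]
end

section
/- Let n ≥ 1, let c : Fin n → ℝ be nonnegative and sorted in nonincreasing order (c_0 ≥ c_1 ≥ … ≥ c_{n−1}), and let Γ be a real number with 0 ≤ Γ and ⌊Γ⌋ < n. Then the optimal value of the protection linear program β(Γ) = max { Σ_{j<n} α_j c_j : 0 ≤ α_j ≤ 1 for all j, Σ_{j<n} α_j ≤ Γ } equals Σ_{j < ⌊Γ⌋} c_j + (Γ − ⌊Γ⌋)·c_{⌊Γ⌋}, i.e., the sum of the ⌊Γ⌋ largest coefficients plus the fraction Γ − ⌊Γ⌋ of the next largest coefficient. -/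
lemma filter_lt_card_aux (n k : ℕ) (hk : k ≤ n) :
    (Finset.univ.filter (fun j : Fin n => (j:ℕ) < k)).card = k := by
  rw [Finset.card_filter, Fin.sum_univ_eq_sum_range (fun i => if i < k then 1 else 0),
    ← Finset.card_filter]
  have : Finset.filter (fun i => i < k) (Finset.range n) = Finset.range k := by
    ext x; simp; omega
  rw [this, Finset.card_range]

/-- For `n ≥ 1`, nonnegative coefficients `c : Fin n → ℝ` sorted in
nonincreasing order, and a real `Γ` with `0 ≤ Γ` and `⌊Γ⌋ < n`, the optimal value of
the protection linear program equals the sum of the `⌊Γ⌋` largest coefficients plus the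
fraction `Γ − ⌊Γ⌋` of the next largest coefficient:
`Σ_{j < ⌊Γ⌋} c_j + (Γ − ⌊Γ⌋)·c_{⌊Γ⌋}`. -/
theorem protection_lp_sorted_value
    {n : ℕ} (hn : 1 ≤ n) (c : Fin n → ℝ) (hc : ∀ j, 0 ≤ c j)
    (hsorted : ∀ i j : Fin n, i ≤ j → c j ≤ c i)
    (Γ : ℝ) (hΓ0 : 0 ≤ Γ) (hΓn : ⌊Γ⌋ < (n : ℤ)) :
    IsGreatest {v : ℝ | ∃ α : Fin n → ℝ, (∀ j, 0 ≤ α j ∧ α j ≤ 1) ∧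
        (∑ j, α j) ≤ Γ ∧ v = ∑ j, α j * c j}
      ((∑ j ∈ Finset.univ.filter (fun j : Fin n => (j : ℤ) < ⌊Γ⌋), c j) +
        (Γ - (⌊Γ⌋ : ℝ)) *
          c ⟨⌊Γ⌋.toNat, by
            have h0 : (0 : ℤ) ≤ ⌊Γ⌋ := Int.floor_nonneg.mpr hΓ0
            omega⟩) := by
  have h0 : (0 : ℤ) ≤ ⌊Γ⌋ := Int.floor_nonneg.mpr hΓ0
  set k : ℕ := ⌊Γ⌋.toNat with hkdef
  have hk : k < n := by omega
  have hkz : (k : ℤ) = ⌊Γ⌋ := Int.toNat_of_nonneg h0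
  have hnotlt : ¬ ((k : ℤ) < ⌊Γ⌋) := by omega
  set kf : Fin n := ⟨k, hk⟩ with hkf
  have hkr : ((k : ℕ) : ℝ) = (⌊Γ⌋ : ℝ) := by exact_mod_cast congrArg (fun z : ℤ => (z : ℝ)) hkz
  have hfloor_le : (⌊Γ⌋ : ℝ) ≤ Γ := Int.floor_le Γ
  have hfrac0 : 0 ≤ Γ - (⌊Γ⌋ : ℝ) := by linarith
  have hfrac1 : Γ - (⌊Γ⌋ : ℝ) ≤ 1 := by
    have := Int.lt_floor_add_one Γ
    push_cast at this ⊢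
    linarith
  have hfilt : (Finset.univ.filter (fun j : Fin n => (j : ℤ) < ⌊Γ⌋)) =
      (Finset.univ.filter (fun j : Fin n => (j : ℕ) < k)) := by
    apply Finset.filter_congr
    intro j _
    constructor <;> intro h <;> omega
  have hcard : (Finset.univ.filter (fun j : Fin n => (j : ℤ) < ⌊Γ⌋)).card = k := by
    rw [hfilt]; exact filter_lt_card_aux n k hk.le
  have hkfmem : kf ∈ Finset.univ.filter (fun j : Fin n => ¬ (j : ℤ) < ⌊Γ⌋) := by
    simp only [Finset.mem_filter, Finset.mem_univ, true_and]
    exact hnotlt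
  set α₀ : Fin n → ℝ :=
    fun j : Fin n => if (j : ℤ) < ⌊Γ⌋ then 1 else if j = kf then Γ - (⌊Γ⌋ : ℝ) else 0 with hα₀
  constructor
  · -- membership: explicit optimal solution
    refine ⟨α₀, ?_, ?_, ?_⟩
    · intro j
      by_cases h1 : (j : ℤ) < ⌊Γ⌋
      · simp [hα₀, h1]
      · by_cases h2 : j = kf
        · subst h2
          have : α₀ kf = Γ - (⌊Γ⌋ : ℝ) := by
            simp only [hα₀]; rw [if_neg hnotlt]; simp
          rw [this]; exact ⟨hfrac0, hfrac1⟩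
        · simp [hα₀, h1, h2]
    · have hsum : (∑ j : Fin n, α₀ j) = Γ := by
        rw [← Finset.sum_filter_add_sum_filter_not Finset.univ (fun j : Fin n => (j : ℤ) < ⌊Γ⌋)]
        have h1 : (∑ j ∈ Finset.univ.filter (fun j : Fin n => (j : ℤ) < ⌊Γ⌋), α₀ j) = k := by
          rw [Finset.sum_congr rfl (fun j hj => ?_), Finset.sum_const, hcard, nsmul_eq_mul, mul_one]
          simp only [Finset.mem_filter] at hj
          simp [hα₀, hj.2]
        have h2 : (∑ j ∈ Finset.univ.filter (fun j : Fin n => ¬ (j : ℤ) < ⌊Γ⌋), α₀ j) =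
            Γ - (⌊Γ⌋ : ℝ) := by
          rw [Finset.sum_congr rfl (fun j hj => ?_) (g := fun j =>
            if j = kf then Γ - (⌊Γ⌋ : ℝ) else 0)]
          · rw [Finset.sum_ite_eq' _ kf (fun _ => Γ - (⌊Γ⌋ : ℝ)), if_pos hkfmem]
          · simp only [Finset.mem_filter] at hj
            simp [hα₀, hj.2]
        rw [h1, h2, hkr]; ring
      rw [hsum]
    · rw [← Finset.sum_filter_add_sum_filter_not Finset.univ (fun j : Fin n => (j : ℤ) < ⌊Γ⌋)
        (fun j : Fin n => α₀ j * c j)]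
      congr 1
      · apply Finset.sum_congr rfl
        intro j hj
        simp only [Finset.mem_filter] at hj
        simp [hα₀, hj.2]
      · rw [Finset.sum_congr rfl (fun j hj => ?_) (g := fun j =>
          if j = kf then (Γ - (⌊Γ⌋ : ℝ)) * c kf else 0)]
        · rw [Finset.sum_ite_eq' _ kf (fun _ => (Γ - (⌊Γ⌋ : ℝ)) * c kf), if_pos hkfmem]
        · simp only [Finset.mem_filter] at hj
          by_cases h2 : j = kf
          · subst h2; simp [hα₀, hj.2]
          · simp [hα₀, hj.2, h2]
  · -- upper bound
    rintro v ⟨α, hα, hsum, rfl⟩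
    have key : ∀ j : Fin n, α j * c j ≤
        (if (j : ℤ) < ⌊Γ⌋ then c j - c kf else 0) + α j * c kf := by
      intro j
      by_cases hj : (j : ℤ) < ⌊Γ⌋
      · have hjk : j ≤ kf := by
          rw [Fin.le_def]; simp only [hkf]; omega
        have hck : c kf ≤ c j := hsorted j kf hjk
        simp only [hj, if_pos]
        nlinarith [(hα j).1, (hα j).2]
      · have hjk : kf ≤ j := by
          rw [Fin.le_def]; simp only [hkf]; omega
        have hck : c j ≤ c kf := hsorted kf j hjk
        simp only [hj, if_neg, not_false_iff]
        nlinarith [(hα j).1]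
    calc ∑ j : Fin n, α j * c j
        ≤ ∑ j : Fin n, ((if (j : ℤ) < ⌊Γ⌋ then c j - c kf else 0) + α j * c kf) :=
          Finset.sum_le_sum (fun j _ => key j)
      _ = (∑ j ∈ Finset.univ.filter (fun j : Fin n => (j : ℤ) < ⌊Γ⌋), (c j - c kf)) +
            (∑ j : Fin n, α j) * c kf := by
          rw [Finset.sum_add_distrib, Finset.sum_ite, Finset.sum_const_zero, add_zero,
            ← Finset.sum_mul]
      _ ≤ (∑ j ∈ Finset.univ.filter (fun j : Fin n => (j : ℤ) < ⌊Γ⌋), (c j - c kf)) +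
            Γ * c kf := by
          have := mul_le_mul_of_nonneg_right hsum (hc kf)
          linarith
      _ = (∑ j ∈ Finset.univ.filter (fun j : Fin n => (j : ℤ) < ⌊Γ⌋), c j) +
            (Γ - (⌊Γ⌋ : ℝ)) * c kf := by
          rw [Finset.sum_sub_distrib, Finset.sum_const, hcard, nsmul_eq_mul, hkr]
          ring
end

section
/- Let J be a nonempty finite index set, let b̄, b̂ : J → ℝ be nonnegative (nominal coefficients and maximum deviations), let x : J → ℝ be a nonnegative decision vector, let C ∈ ℝ, and let Γ be real with 0 ≤ Γ ≤ |J|. Then the nonlinear robust constraint Σ_{j∈J} b̄_j x_j + max{ Σ_{j∈J} α_j b̂_j x_j : 0 ≤ α_j ≤ 1, Σ_j α_j ≤ Γ } ≤ C holds if and only if there exist a real z ≥ 0 and a nonnegative vector p : J → ℝ satisfying z + p_j ≥ b̂_j x_j for all j ∈ J and Σ_{j∈J} b̄_j x_j + Γ·z + Σ_{j∈J} p_j ≤ C (the linearized robust counterpart). -/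
/-- The nonlinear robust constraint
`Σ_j b̄_j x_j + max{ Σ_j α_j b̂_j x_j : 0 ≤ α_j ≤ 1, Σ_j α_j ≤ Γ } ≤ C`
holds if and only if there exist `z ≥ 0` and `p ≥ 0` with `z + p_j ≥ b̂_j x_j` for all
`j` and `Σ_j b̄_j x_j + Γ·z + Σ_j p_j ≤ C` (the linearized robust counterpart). -/
theorem robust_constraint_iff_linearized
    {J : Type*} [Fintype J] [Nonempty J]
    (bbar bhat x : J → ℝ)
    (hbbar : ∀ j, 0 ≤ bbar j) (hbhat : ∀ j, 0 ≤ bhat j) (hx : ∀ j, 0 ≤ x j)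
    (C : ℝ) (Γ : ℝ) (hΓ0 : 0 ≤ Γ) (hΓcard : Γ ≤ (Fintype.card J : ℝ)) :
    (∀ α : J → ℝ, (∀ j, 0 ≤ α j ∧ α j ≤ 1) → (∑ j, α j) ≤ Γ →
        (∑ j, bbar j * x j) + (∑ j, α j * (bhat j * x j)) ≤ C) ↔
      ∃ (z : ℝ) (p : J → ℝ), 0 ≤ z ∧ (∀ j, 0 ≤ p j) ∧
        (∀ j, bhat j * x j ≤ z + p j) ∧
        (∑ j, bbar j * x j) + Γ * z + (∑ j, p j) ≤ C := by
  classical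
  set n := Fintype.card J with hn
  set c : J → ℝ := fun j => bhat j * x j with hc
  have hc0 : ∀ j, 0 ≤ c j := fun j => mul_nonneg (hbhat j) (hx j)
  constructor
  · intro h
    obtain ⟨e⟩ : Nonempty (J ≃ Fin n) := ⟨Fintype.equivFin J⟩
    set σ := Tuple.sort (fun i => c (e.symm i)) with hσ
    set g : Fin n → ℝ := fun i => c (e.symm (σ i)) with hg
    have hgmono : Monotone g := by
      have hmono := Tuple.monotone_sort (fun i => c (e.symm i))
      exact fun a b hab => hmono hab
    have hg0 : ∀ i, 0 ≤ g i := fun i => hc0 _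
    have hsum : ∀ F : ℝ → ℝ, ∑ j, F (c j) = ∑ i, F (g i) := by
      intro F
      rw [← Equiv.sum_comp e.symm (fun j => F (c j)),
        ← Equiv.sum_comp σ (fun i => F (c (e.symm i)))]
    have hsum2 : ∀ A : Fin n → ℝ, ∑ j, A (σ.symm (e j)) * c j = ∑ i, A i * g i := by
      intro A
      rw [← Equiv.sum_comp e.symm (fun j => A (σ.symm (e j)) * c j)]
      simp only [Equiv.apply_symm_apply]
      rw [← Equiv.sum_comp σ (fun i => A (σ.symm i) * c (e.symm i))]
      simp [hg]
    have hsum3 : ∀ A : Fin n → ℝ, (∑ j, A (σ.symm (e j))) = ∑ i, A i := by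
      intro A
      rw [← Equiv.sum_comp e.symm (fun j => A (σ.symm (e j)))]
      simp only [Equiv.apply_symm_apply]
      exact Equiv.sum_comp σ.symm A
    set k : ℕ := ⌊Γ⌋.toNat with hk
    have hfloor0 : (0:ℤ) ≤ ⌊Γ⌋ := Int.floor_nonneg.mpr hΓ0
    have hkZ : ((k : ℤ)) = ⌊Γ⌋ := Int.toNat_of_nonneg hfloor0
    have hkΓ : (k : ℝ) ≤ Γ := by
      have : (((k : ℤ)) : ℝ) ≤ Γ := by rw [hkZ]; exact Int.floor_le Γ
      exact_mod_cast this
    have hΓk1 : Γ < (k : ℝ) + 1 := by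
      have : Γ < (((k : ℤ)) : ℝ) + 1 := by rw [hkZ]; exact Int.lt_floor_add_one Γ
      exact_mod_cast this
    have hkn : k ≤ n := by
      have h1 : ⌊Γ⌋ ≤ ⌊(n : ℝ)⌋ := Int.floor_le_floor hΓcard
      rw [Int.floor_natCast] at h1
      omega
    rcases eq_or_lt_of_le hkn with hkeq | hklt
    · -- k = n : Γ = n, take α ≡ 1
      have hΓn : Γ = (n : ℝ) := by
        have : (n : ℝ) ≤ Γ := by rw [← hkeq]; exact hkΓ
        linarith
      have h1 := h (fun _ => 1) (fun j => ⟨zero_le_one, le_refl 1⟩)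
        (by simp [hΓn, hn])
      refine ⟨0, c, le_refl 0, hc0, fun j => by simp [hc], ?_⟩
      simp only [one_mul] at h1
      simpa using h1
    · -- k < n
      set f : ℝ := Γ - k with hf
      have hf0 : 0 ≤ f := by simp [hf]; linarith
      have hf1 : f ≤ 1 := by simp [hf]; linarith
      set m : ℕ := n - k - 1 with hm
      have hmn : m < n := by omega
      set mF : Fin n := ⟨m, hmn⟩ with hmF
      set z : ℝ := g mF with hz
      set p : J → ℝ := fun j => max (c j - z) 0 with hp
      set A : Fin n → ℝ := fun i => if m < i.val then 1 else if i.val = m then f else 0 with hA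
      set α : J → ℝ := fun j => A (σ.symm (e j)) with hα
      have hIoi : Finset.univ.filter (fun i : Fin n => m < i.val) = Finset.Ioi mF := by
        ext i
        simp only [Finset.mem_filter, Finset.mem_univ, true_and, Finset.mem_Ioi]
        exact Iff.rfl
      have hcardIoi : (Finset.Ioi mF).card = k := by
        rw [Fin.card_Ioi]; simp [hmF]; omega
      -- sum of A
      have hsumA : ∑ i, A i = Γ := by
        have hpt : ∀ i : Fin n, A i =
            (if m < i.val then (1:ℝ) else 0) + (if i = mF then f else 0) := by
          intro i
          simp only [hA, Fin.ext_iff, hmF]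
          split_ifs <;> simp_all <;> omega
        rw [Finset.sum_congr rfl (fun i _ => hpt i), Finset.sum_add_distrib,
          Finset.sum_boole, Finset.sum_ite_eq' Finset.univ mF (fun _ => f)]
        simp [hIoi, hcardIoi, hf]
      -- sum of A * g
      have hsumAg : ∑ i, A i * g i = (∑ i ∈ Finset.Ioi mF, g i) + f * z := by
        have hpt : ∀ i : Fin n, A i * g i =
            (if m < i.val then g i else 0) + (if i = mF then f * g i else 0) := by
          intro i
          simp only [hA, Fin.ext_iff, hmF]
          split_ifs <;> first | omega | ring
        rw [Finset.sum_congr rfl (fun i _ => hpt i), Finset.sum_add_distrib,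
          ← Finset.sum_filter, hIoi, Finset.sum_ite_eq' Finset.univ mF (fun i => f * g i)]
        simp [hz]
      -- sum of p
      have hsump : ∑ j, p j = (∑ i ∈ Finset.Ioi mF, g i) - k * z := by
        have h1 : ∑ j, p j = ∑ i, max (g i - z) 0 := hsum (fun t => max (t - z) 0)
        have hpt : ∀ i : Fin n, max (g i - z) 0 = if m < i.val then g i - z else 0 := by
          intro i
          split_ifs with hi
          · have : mF ≤ i := by simp [hmF, Fin.le_def]; omega
            have := hgmono this
            rw [max_eq_left]; linarith
          · have : i ≤ mF := by simp [hmF, Fin.le_def]; omega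
            have := hgmono this
            rw [max_eq_right]; linarith
        rw [h1, Finset.sum_congr rfl (fun i _ => hpt i), ← Finset.sum_filter, hIoi,
          Finset.sum_sub_distrib, Finset.sum_const, hcardIoi]
        simp [nsmul_eq_mul]
      -- feasibility of α
      have hαb : ∀ j, 0 ≤ α j ∧ α j ≤ 1 := by
        intro j
        simp only [hα, hA]
        split_ifs <;> constructor <;> linarith
      have hαsum : (∑ j, α j) ≤ Γ := by
        rw [hα, hsum3 A, hsumA]
      have hkey := h α hαb hαsum
      have hαc : ∑ j, α j * c j = (∑ i ∈ Finset.Ioi mF, g i) + f * z := by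
        rw [hα, hsum2 A, hsumAg]
      refine ⟨z, p, hg0 mF, fun j => le_max_right _ _, fun j => ?_, ?_⟩
      · have := le_max_left (c j - z) 0
        simp only [hp]
        change c j ≤ z + max (c j - z) 0
        linarith
      · have : ∑ j, α j * c j ≤ C - ∑ j, bbar j * x j := by linarith
        rw [hαc] at this
        rw [hsump]
        have hΓeq : Γ * z = (k : ℝ) * z + f * z := by simp [hf]; ring
        linarith
  · rintro ⟨z, p, hz0, hp0, hzp, hlin⟩ α hαb hαsum
    have hterm : ∀ j, α j * c j ≤ α j * z + p j := by
      intro j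
      have h1 : α j * c j ≤ α j * (z + p j) :=
        mul_le_mul_of_nonneg_left (hzp j) (hαb j).1
      have h2 : α j * p j ≤ p j := by
        nlinarith [(hαb j).1, (hαb j).2, hp0 j]
      nlinarith
    have hsumle : ∑ j, α j * c j ≤ (∑ j, α j) * z + ∑ j, p j := by
      calc ∑ j, α j * c j ≤ ∑ j, (α j * z + p j) :=
            Finset.sum_le_sum (fun j _ => hterm j)
        _ = (∑ j, α j) * z + ∑ j, p j := by
            rw [Finset.sum_add_distrib, ← Finset.sum_mul]
    have : (∑ j, α j) * z ≤ Γ * z := mul_le_mul_of_nonneg_right hαsum hz0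
    calc (∑ j, bbar j * x j) + ∑ j, α j * c j
        ≤ (∑ j, bbar j * x j) + Γ * z + ∑ j, p j := by linarith
      _ ≤ C := hlin
end

section
/- Let J be a finite index set, let b̄, b̂ : J → ℝ be nonnegative, let x : J → ℝ be nonnegative, let C ∈ ℝ, and let Γ be real with 0 ≤ Γ and ⌊Γ⌋ < |J|. Suppose z ≥ 0 and p : J → ℝ with p_j ≥ 0 satisfy z + p_j ≥ b̂_j x_j for all j ∈ J and Σ_{j∈J} b̄_j x_j + Γ·z + Σ_{j∈J} p_j ≤ C. Then for every subset S ⊆ J with |S| ≤ ⌊Γ⌋ and every t ∈ J \ S, it holds that Σ_{j∈J} b̄_j x_j + Σ_{j∈S} b̂_j x_j + (Γ − ⌊Γ⌋)·b̂_t x_t ≤ C; in particular, the solution x remains feasible for every realization of the uncertain coefficients in which at most ⌊Γ⌋ coefficients deviate to their upper bound b̄_j + b̂_j and one additional coefficient deviates by at most (Γ − ⌊Γ⌋)·b̂_t. -/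
/-- If `z ≥ 0`, `p ≥ 0` satisfy `z + p_j ≥ b̂_j x_j` for all `j` and
`Σ_j b̄_j x_j + Γ·z + Σ_j p_j ≤ C`, then for every subset `S ⊆ J` with `|S| ≤ ⌊Γ⌋` and
every `t ∈ J \ S`,
`Σ_j b̄_j x_j + Σ_{j∈S} b̂_j x_j + (Γ − ⌊Γ⌋)·b̂_t x_t ≤ C`:
the solution `x` remains feasible whenever at most `⌊Γ⌋` coefficients deviate to their
upper bound and one more deviates by at most `(Γ − ⌊Γ⌋)·b̂_t`. -/
theorem robust_solution_protection
    {J : Type*} [Fintype J]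
    (bbar bhat x : J → ℝ)
    (hbbar : ∀ j, 0 ≤ bbar j) (hbhat : ∀ j, 0 ≤ bhat j) (hx : ∀ j, 0 ≤ x j)
    (C : ℝ) (Γ : ℝ) (hΓ0 : 0 ≤ Γ) (hΓcard : ⌊Γ⌋ < (Fintype.card J : ℤ))
    (z : ℝ) (p : J → ℝ) (hz : 0 ≤ z) (hp : ∀ j, 0 ≤ p j)
    (hzp : ∀ j, bhat j * x j ≤ z + p j)
    (hrob : (∑ j, bbar j * x j) + Γ * z + (∑ j, p j) ≤ C) :
    ∀ (S : Finset J) (t : J), (S.card : ℤ) ≤ ⌊Γ⌋ → t ∉ S →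
      (∑ j, bbar j * x j) + (∑ j ∈ S, bhat j * x j) +
        (Γ - (⌊Γ⌋ : ℝ)) * (bhat t * x t) ≤ C := by
  intro S t hScard htS
  set f : ℝ := Γ - (⌊Γ⌋ : ℝ) with hf
  classical
  have hf0 : 0 ≤ f := by
    have := Int.floor_le Γ; rw [hf]; linarith
  have hf1 : f ≤ 1 := by
    have := Int.lt_floor_add_one Γ; rw [hf]; linarith
  have hxt0 : 0 ≤ bhat t * x t := mul_nonneg (hbhat t) (hx t)
  have key : (∑ j ∈ S, bhat j * x j) + f * (bhat t * x t) ≤ Γ * z + (∑ j, p j) := by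
    have h1 : (∑ j ∈ S, bhat j * x j) ≤ ∑ j ∈ S, (z + p j) :=
      Finset.sum_le_sum fun j _ => hzp j
    have h2 : f * (bhat t * x t) ≤ f * (z + p t) :=
      mul_le_mul_of_nonneg_left (hzp t) hf0
    have h3 : (∑ j ∈ S, (z + p j)) = (S.card : ℝ) * z + ∑ j ∈ S, p j := by
      rw [Finset.sum_add_distrib, Finset.sum_const, nsmul_eq_mul]
    have hcard : (S.card : ℝ) + f ≤ Γ := by
      have : (S.card : ℝ) ≤ (⌊Γ⌋ : ℝ) := by exact_mod_cast hScard
      rw [hf]; linarith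
    have hzbound : ((S.card : ℝ) + f) * z ≤ Γ * z :=
      mul_le_mul_of_nonneg_right hcard hz
    have hpbound : (∑ j ∈ S, p j) + f * p t ≤ ∑ j, p j := by
      have h4 : f * p t ≤ p t := by
        nlinarith [hp t]
      have h5 : (∑ j ∈ S, p j) + p t = ∑ j ∈ insert t S, p j := by
        rw [Finset.sum_insert htS]; ring
      have h6 : (∑ j ∈ insert t S, p j) ≤ ∑ j, p j :=
        Finset.sum_le_sum_of_subset_of_nonneg (Finset.subset_univ _)
          (fun j _ _ => hp j)
      linarith
    calc (∑ j ∈ S, bhat j * x j) + f * (bhat t * x t)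
        ≤ ((S.card : ℝ) * z + ∑ j ∈ S, p j) + f * (z + p t) := by
          rw [← h3]; linarith
      _ = ((S.card : ℝ) + f) * z + ((∑ j ∈ S, p j) + f * p t) := by ring
      _ ≤ Γ * z + (∑ j, p j) := by linarith
  linarith
end
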